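/- For every nonempty interval I ⊆ ℝ there exist a locally finite family ((a_α, b_α))_{α ∈ A} of bounded open intervals of ℝ and an epimorphism ⊕_{α ∈ A} k_{(a_α,b_α)} → k_I in the category of sheaves of k-vector spaces on ℝ. -/

import Mathlib

open CategoryTheory TopologicalSpace Set Topology

noncomputable section

variable (k : Type) [Field k]

/-- The support of the function `s : V ∩ I → k` is closed in `V`. -/
def SuppClosedIn (I V : Set ℝ) (s : ↥(V ∩ I) → k) : Prop :=
  ∀ x ∈ V, x ∈ closure {y : ℝ | ∃ h : y ∈ V ∩ I, s ⟨y, h⟩ ≠ 0} →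
    ∃ h : x ∈ V ∩ I, s ⟨x, h⟩ ≠ 0

lemma zero_locConst (I V : Set ℝ) :
    IsLocallyConstant (0 : ↥(V ∩ I) → k) ∧ SuppClosedIn k I V 0 := by
  constructor
  · exact IsLocallyConstant.const 0
  · intro x _ hx
    exfalso
    have h0 : {y : ℝ | ∃ h : y ∈ V ∩ I, (0 : ↥(V ∩ I) → k) ⟨y, h⟩ ≠ 0} = ∅ := by
      ext y; simp
    rw [h0, closure_empty] at hx
    exact hx

/-- The sections over `V` of the sheaf `k_I`: locally constant functions on `V ∩ I`
whose support is closed in `V`. -/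
def secSub (I V : Set ℝ) : Submodule k (↥(V ∩ I) → k) where
  carrier := {s | IsLocallyConstant s ∧ SuppClosedIn k I V s}
  zero_mem' := zero_locConst k I V
  add_mem' := by
    rintro s t ⟨hslc, hscl⟩ ⟨htlc, htcl⟩
    have hlc : IsLocallyConstant (s + t) := hslc.comp₂ htlc (· + ·)
    refine ⟨hlc, ?_⟩
    intro x hxV hxcl
    have hsub : {y : ℝ | ∃ h : y ∈ V ∩ I, (s + t) ⟨y, h⟩ ≠ 0}
        ⊆ {y : ℝ | ∃ h : y ∈ V ∩ I, s ⟨y, h⟩ ≠ 0}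
          ∪ {y : ℝ | ∃ h : y ∈ V ∩ I, t ⟨y, h⟩ ≠ 0} := by
      rintro y ⟨h, hy⟩
      by_cases hsy : s ⟨y, h⟩ = 0
      · refine Or.inr ⟨h, fun h0 => hy ?_⟩
        show s ⟨y, h⟩ + t ⟨y, h⟩ = 0
        rw [hsy, h0, add_zero]
      · exact Or.inl ⟨h, hsy⟩
    have hxVI : x ∈ V ∩ I := by
      have hcl2 := closure_mono hsub hxcl
      rw [closure_union] at hcl2
      rcases hcl2 with h | h
      · exact (hscl x hxV h).choose
      · exact (htcl x hxV h).choose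
    refine ⟨hxVI, ?_⟩
    have hA : IsClosed {y : ↥(V ∩ I) | (s + t) y ≠ 0} := by
      have h1 : IsOpen ((s + t) ⁻¹' {0}) := hlc {0}
      have h2 := h1.isClosed_compl
      have h3 : ((s + t) ⁻¹' {0})ᶜ = {y : ↥(V ∩ I) | (s + t) y ≠ 0} := by
        ext y; simp
      exact h3 ▸ h2
    have hmem : (⟨x, hxVI⟩ : ↥(V ∩ I)) ∈ closure {y : ↥(V ∩ I) | (s + t) y ≠ 0} := by
      rw [closure_subtype]
      have himg : Subtype.val '' {y : ↥(V ∩ I) | (s + t) y ≠ 0}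
          = {y : ℝ | ∃ h : y ∈ V ∩ I, (s + t) ⟨y, h⟩ ≠ 0} := by
        ext y
        constructor
        · rintro ⟨z, hz, rfl⟩; exact ⟨z.2, hz⟩
        · rintro ⟨h, hy⟩; exact ⟨⟨y, h⟩, hy, rfl⟩
      rw [himg]
      exact hxcl
    have := hA.closure_eq ▸ hmem
    exact this
  smul_mem' := by
    intro c s hs
    rcases hs with ⟨hlc, hcl⟩
    by_cases hc : c = 0
    · subst hc
      rw [zero_smul]
      exact zero_locConst k I V
    · constructor
      · exact hlc.comp (fun a => c • a)
      · intro x hxV hxcl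
        have hset : {y : ℝ | ∃ h : y ∈ V ∩ I, (c • s) ⟨y, h⟩ ≠ 0}
            = {y : ℝ | ∃ h : y ∈ V ∩ I, s ⟨y, h⟩ ≠ 0} := by
          ext y
          constructor
          · rintro ⟨h, hy⟩
            refine ⟨h, fun h0 => hy ?_⟩
            show c • s ⟨y, h⟩ = 0
            rw [h0, smul_zero]
          · rintro ⟨h, hy⟩
            exact ⟨h, by simpa [smul_eq_zero, hc] using hy⟩
        rw [hset] at hxcl
        obtain ⟨h, hy⟩ := hcl x hxV hxcl
        exact ⟨h, by simpa [smul_eq_zero, hc] using hy⟩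
/-- Restriction of sections. -/
def resFun (I : Set ℝ) {V W : Set ℝ} (h : W ⊆ V) (s : ↥(V ∩ I) → k) : ↥(W ∩ I) → k :=
  fun y => s ⟨y.1, ⟨h y.2.1, y.2.2⟩⟩

lemma resFun_mem (I : Set ℝ) {V W : Set ℝ} (h : W ⊆ V) (s : ↥(V ∩ I) → k)
    (hs : s ∈ secSub k I V) : resFun k I h s ∈ secSub k I W := by
  obtain ⟨hlc, hcl⟩ := hs
  constructor
  · exact hlc.comp_continuous (Continuous.subtype_mk continuous_subtype_val _)
  · intro x hxW hxcl
    have hsub : {y : ℝ | ∃ h' : y ∈ W ∩ I, resFun k I h s ⟨y, h'⟩ ≠ 0}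
        ⊆ {y : ℝ | ∃ h' : y ∈ V ∩ I, s ⟨y, h'⟩ ≠ 0} := by
      rintro y ⟨h', hy⟩
      exact ⟨⟨h h'.1, h'.2⟩, hy⟩
    obtain ⟨hxVI, hne⟩ := hcl x (h hxW) (closure_mono hsub hxcl)
    exact ⟨⟨hxW, hxVI.2⟩, hne⟩

/-- Restriction as a linear map. -/
def resLM (I : Set ℝ) {V W : Set ℝ} (h : W ⊆ V) : secSub k I V →ₗ[k] secSub k I W where
  toFun s := ⟨resFun k I h s.1, resFun_mem k I h s.1 s.2⟩
  map_add' s t := rfl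
  map_smul' c s := rfl

/-- The presheaf `k_I` on `ℝ`. -/
def intervalPresheaf (I : Set ℝ) : TopCat.Presheaf (ModuleCat.{0} k) (TopCat.of ℝ) where
  obj V := ModuleCat.of k (secSub k I V.unop.1)
  map {V W} f := ModuleCat.ofHom (resLM k I (leOfHom f.unop))
  map_id V := rfl
  map_comp f g := rfl
theorem intervalPresheaf_isSheaf (I : Set ℝ) : (intervalPresheaf k I).IsSheaf := by
  classical
  rw [TopCat.Presheaf.isSheaf_iff_isSheafUniqueGluing]
  intro ι U sf hcomp
  change ∀ i, secSub k I (U i).1 at sf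
  -- pointwise compatibility
  have key : ∀ (i j : ι) (x : ℝ) (hxi : x ∈ (U i).1 ∩ I) (hxj : x ∈ (U j).1 ∩ I),
      (sf i).1 ⟨x, hxi⟩ = (sf j).1 ⟨x, hxj⟩ := by
    intro i j x hxi hxj
    have h := hcomp i j
    have hmem : x ∈ (U i ⊓ U j).1 ∩ I := ⟨⟨hxi.1, hxj.1⟩, hxi.2⟩
    have h2 := congrFun (congrArg Subtype.val h) ⟨x, hmem⟩
    exact h2
  have hmemS : ∀ x : ↥((iSup U : Opens (TopCat.of ℝ)).1 ∩ I), ∃ i, x.1 ∈ U i := by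
    intro x
    exact Opens.mem_iSup.mp x.2.1
  set idx : ↥((iSup U : Opens (TopCat.of ℝ)).1 ∩ I) → ι := fun x => (hmemS x).choose with hidxdef
  have hidx : ∀ x, x.1 ∈ U (idx x) := fun x => (hmemS x).choose_spec
  set s₀ : ↥((iSup U : Opens (TopCat.of ℝ)).1 ∩ I) → k :=
    fun x => (sf (idx x)).1 ⟨x.1, ⟨hidx x, x.2.2⟩⟩ with hs₀def
  have hs₀ : ∀ (x : ↥((iSup U : Opens (TopCat.of ℝ)).1 ∩ I)) (i : ι) (hx : x.1 ∈ U i),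
      s₀ x = (sf i).1 ⟨x.1, ⟨hx, x.2.2⟩⟩ :=
    fun x i hx => key (idx x) i x.1 ⟨hidx x, x.2.2⟩ ⟨hx, x.2.2⟩
  have hlc : IsLocallyConstant s₀ := by
    rw [IsLocallyConstant.iff_exists_open]
    intro x
    obtain ⟨i, hi⟩ := hmemS x
    have hlci : IsLocallyConstant ((sf i).1 : ↥((U i).1 ∩ I) → k) := (sf i).2.1
    obtain ⟨W, hWopen, hpW, hWconst⟩ := hlci.exists_open (⟨x.1, ⟨hi, x.2.2⟩⟩ : ↥((U i).1 ∩ I))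
    obtain ⟨O, hOopen, hWO⟩ := isOpen_induced_iff.mp hWopen
    subst hWO
    refine ⟨Subtype.val ⁻¹' (O ∩ (U i).1), (hOopen.inter (U i).2).preimage continuous_subtype_val,
      ⟨hpW, hi⟩, ?_⟩
    intro y hy
    have hyi : y.1 ∈ U i := hy.2
    rw [hs₀ y i hyi, hs₀ x i hi]
    exact hWconst ⟨y.1, ⟨hyi, y.2.2⟩⟩ hy.1
  have hscl : SuppClosedIn k I (iSup U : Opens (TopCat.of ℝ)).1 s₀ := by
    intro x hxS hxcl
    obtain ⟨i, hi⟩ := Opens.mem_iSup.mp hxS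
    have h1 : x ∈ closure ({y : ℝ | ∃ h : y ∈ (iSup U : Opens (TopCat.of ℝ)).1 ∩ I, s₀ ⟨y, h⟩ ≠ 0}
        ∩ (U i).1) := by
      rw [mem_closure_iff] at hxcl ⊢
      intro O hO hxO
      obtain ⟨z, hz⟩ := hxcl (O ∩ (U i).1) (hO.inter (U i).2) ⟨hxO, hi⟩
      exact ⟨z, hz.1.1, hz.2, hz.1.2⟩
    have hsub : {y : ℝ | ∃ h : y ∈ (iSup U : Opens (TopCat.of ℝ)).1 ∩ I, s₀ ⟨y, h⟩ ≠ 0}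
        ∩ (U i).1 ⊆ {y : ℝ | ∃ h : y ∈ (U i).1 ∩ I, (sf i).1 ⟨y, h⟩ ≠ 0} := by
      rintro y ⟨⟨hy, hne⟩, hyi⟩
      refine ⟨⟨hyi, hy.2⟩, ?_⟩
      rw [← hs₀ ⟨y, hy⟩ i hyi]
      exact hne
    obtain ⟨hyUI, hne⟩ := (sf i).2.2 x hi (closure_mono hsub h1)
    refine ⟨⟨hxS, hyUI.2⟩, ?_⟩
    rw [hs₀ ⟨x, ⟨hxS, hyUI.2⟩⟩ i hyUI.1]
    exact hne
  refine ⟨(⟨s₀, hlc, hscl⟩ : secSub k I (iSup U : Opens (TopCat.of ℝ)).1), ?_, ?_⟩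
  · intro i
    apply Subtype.ext
    funext y
    exact hs₀ ⟨y.1, ⟨leOfHom (Opens.leSupr U i) y.2.1, y.2.2⟩⟩ i y.2.1
  · intro t ht
    apply Subtype.ext
    funext x
    have h := ht (idx x)
    have h2 := congrFun (congrArg Subtype.val h) ⟨x.1, ⟨hidx x, x.2.2⟩⟩
    exact h2

/-- The sheaf `k_I` on `ℝ` for an interval `I`: locally constant functions on `V ∩ I`
whose support is closed in `V`. -/
def intervalSheaf (I : Set ℝ) :
    Sheaf (Opens.grothendieckTopology (TopCat.of ℝ)) (ModuleCat.{0} k) :=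
  ⟨intervalPresheaf k I, intervalPresheaf_isSheaf k I⟩
/-- The category of sheaves of `k`-vector spaces on `ℝ`. -/
abbrev RealSheafCat := Sheaf (Opens.grothendieckTopology (TopCat.of ℝ)) (ModuleCat.{0} k)

instance sheafHomSMul (F G : RealSheafCat k) : SMul k (F ⟶ G) :=
  ⟨fun c f => ⟨c • f.hom⟩⟩

instance sheafHomModule (F G : RealSheafCat k) : Module k (F ⟶ G) :=
  Function.Injective.module k
    { toFun := fun f : F ⟶ G => f.hom
      map_zero' := rfl
      map_add' := fun _ _ => rfl }
    (fun _ _ h => Sheaf.hom_ext h) (fun _ _ => rfl)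

instance : HasExt.{1} (RealSheafCat k) := by
  letI := HasDerivedCategory.standard (RealSheafCat k)
  exact hasExt_of_hasDerivedCategory _

/-- The interval `(a, b)` with possibly infinite endpoints. -/
def Ioo' (a b : EReal) : Set ℝ := {x : ℝ | a < (x : EReal) ∧ (x : EReal) < b}

/-- The interval `[a, b)` with a possibly infinite right endpoint. -/
def Ico' (a : ℝ) (b : EReal) : Set ℝ := {x : ℝ | a ≤ x ∧ (x : EReal) < b}

/-- The interval `(a, b]` with a possibly infinite left endpoint. -/
def Ioc' (a : EReal) (b : ℝ) : Set ℝ := {x : ℝ | a < (x : EReal) ∧ x ≤ b}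

/-- Identification of sheaves on the topological space `ℝ` with objects of `RealSheafCat`. -/
def toRS (F : TopCat.Sheaf (ModuleCat.{0} k) (TopCat.of ℝ)) : RealSheafCat k := F


/-!
An interval `I ⊆ ℝ` is locally closed, so `U = ℝ ∖ (closure I ∖ I)` is an open neighbourhood of
`I`. For an open `J ⊆ U`, extending a section of `k_J` by zero and restricting it to `I` defines a
morphism `k_J ⟶ k_I`. If such `J` cover `I`, these morphisms are jointly locally surjective, because
a section of `k_I` is locally constant and vanishes near every point outside `I`. A locally finite
cover of `I` by bounded open intervals inside `U` is cut out of the family `(n - 1, n + 1)`, `n ∈ ℤ`: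
intersect each member with `U` and keep the connected component containing the points of `I`.
-/

section Order

variable {α : Type*} [ConditionallyCompleteLinearOrder α] [TopologicalSpace α] [OrderTopology α]

theorem IsPreconnected.isLocallyClosed {s : Set α} (hs : _root_.IsPreconnected s) :
    IsLocallyClosed s := by
  rcases hs.mem_intervals with h | h | h | h | h | h | h | h | h | h <;> rw [h]
  exacts [isLocallyClosed_Icc, isLocallyClosed_Ico, isLocallyClosed_Ioc, isLocallyClosed_Ioo,
    isLocallyClosed_Ici, isLocallyClosed_Ioi, isLocallyClosed_Iic, isLocallyClosed_Iio,
    isClosed_univ.isLocallyClosed, isClosed_empty.isLocallyClosed]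

theorem IsOpen.csInf_notMem [DenselyOrdered α] [NoMinOrder α] {s : Set α} (hs : IsOpen s)
    (hb : BddBelow s) : sInf s ∉ s := fun h => by
  obtain ⟨l, hl, hls⟩ := exists_Ioc_subset_of_mem_nhds (hs.mem_nhds h) (exists_lt _)
  obtain ⟨m, hlm, hm⟩ := exists_between hl
  exact hm.not_ge (csInf_le hb (hls ⟨hlm, hm.le⟩))

theorem IsOpen.csSup_notMem [DenselyOrdered α] [NoMaxOrder α] {s : Set α} (hs : IsOpen s)
    (hb : BddAbove s) : sSup s ∉ s :=
  IsOpen.csInf_notMem (α := αᵒᵈ) hs hb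

theorem IsOpen.eq_Ioo_csInf_csSup [DenselyOrdered α] [NoMinOrder α] [NoMaxOrder α] {s : Set α}
    (hs : IsOpen s) (hc : _root_.IsConnected s) (hb : BddBelow s) (ha : BddAbove s) :
    s = Ioo (sInf s) (sSup s) := by
  refine (hc.Ioo_csInf_csSup_subset hb ha).antisymm' fun x hx => ?_
  obtain ⟨h₁, h₂⟩ := subset_Icc_csInf_csSup hb ha hx
  exact ⟨h₁.lt_of_ne (ne_of_mem_of_not_mem hx (hs.csInf_notMem hb)).symm,
    h₂.lt_of_ne (ne_of_mem_of_not_mem hx (hs.csSup_notMem ha))⟩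

end Order

open Filter in
theorem locallyFinite_Ioo_int : LocallyFinite fun n : ℤ => Ioo ((n : ℝ) - 1) (n + 1) :=
  locallyFinite_Ioo_of_tendsto (tendsto_atTop_add_const_right _ _ tendsto_intCast_atTop_atTop)
    (tendsto_atBot_add_const_right _ _ (tendsto_intCast_atBot_iff.2 tendsto_id))

theorem exists_locallyFinite_Ioo_cover {I U : Set ℝ} (hI : I.OrdConnected) (hU : IsOpen U)
    (hIU : I ⊆ U) :
    ∃ (A : Type) (a b : A → ℝ), (∀ α, a α < b α) ∧ LocallyFinite (fun α => Ioo (a α) (b α)) ∧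
      (∀ α, Ioo (a α) (b α) ⊆ U) ∧ I ⊆ ⋃ α, Ioo (a α) (b α) := by
  let A := {n : ℤ // (Ioo ((n : ℝ) - 1) (n + 1) ∩ I).Nonempty}
  let C : A → Set ℝ := fun n =>
    connectedComponentIn (Ioo ((n : ℝ) - 1) (n + 1) ∩ U) n.2.some
  have hC_sub (n : A) : C n ⊆ Ioo ((n : ℝ) - 1) (n + 1) ∩ U := connectedComponentIn_subset _ _
  have hI_sub (n : A) : Ioo ((n : ℝ) - 1) (n + 1) ∩ I ⊆ C n :=
    (ordConnected_Ioo.inter hI).isPreconnected.subset_connectedComponentIn n.2.some_mem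
      (inter_subset_inter_right _ hIU)
  have hC_eq (n : A) : C n = Ioo (sInf (C n)) (sSup (C n)) :=
    (isOpen_Ioo.inter hU).connectedComponentIn.eq_Ioo_csInf_csSup
      ⟨⟨_, hI_sub n n.2.some_mem⟩, isPreconnected_connectedComponentIn⟩
      (bddBelow_Ioo.mono ((hC_sub n).trans inter_subset_left))
      (bddAbove_Ioo.mono ((hC_sub n).trans inter_subset_left))
  refine ⟨A, fun n => sInf (C n), fun n => sSup (C n), fun n => ?_, ?_, fun n => ?_, fun x hx => ?_⟩
  · exact nonempty_Ioo.1 (hC_eq n ▸ ⟨_, hI_sub n n.2.some_mem⟩)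
  · refine (locallyFinite_Ioo_int.comp_injective Subtype.val_injective).subset fun n => ?_
    exact (hC_eq n).symm.subset.trans ((hC_sub n).trans inter_subset_left)
  · exact (hC_eq n).symm.subset.trans ((hC_sub n).trans inter_subset_right)
  · have hx' : x ∈ Ioo ((⌊x⌋ : ℝ) - 1) (⌊x⌋ + 1) :=
      ⟨by linarith [Int.floor_le x], Int.lt_floor_add_one x⟩
    exact mem_iUnion.2 ⟨⟨⌊x⌋, x, hx', hx⟩, hC_eq _ ▸ hI_sub _ ⟨hx', hx⟩⟩

section ExtensionByZero

def sectionSupport (I V : Set ℝ) (s : ↥(V ∩ I) → k) : Set ℝ :=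
  {y | ∃ h : y ∈ V ∩ I, s ⟨y, h⟩ ≠ 0}

lemma const_mem_secSub {J W : Set ℝ} (hWJ : W ⊆ J) (c : k) :
    (fun _ => c : ↥(W ∩ J) → k) ∈ secSub k J W := by
  refine ⟨IsLocallyConstant.const c, fun x hxW hx => ?_⟩
  by_cases hc : c = 0
  · simp [hc] at hx
  · exact ⟨⟨hxW, hWJ hxW⟩, hc⟩

open Classical in
def extendRestrict (I J V : Set ℝ) (s : ↥(V ∩ J) → k) : ↥(V ∩ I) → k :=
  fun x => if h : x.1 ∈ J then s ⟨x.1, x.2.1, h⟩ else 0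

variable {k}

lemma eq_zero_of_notMem_closure_sectionSupport {I V : Set ℝ} {s : ↥(V ∩ I) → k}
    {y : ↥(V ∩ I)} (hy : y.1 ∉ closure (sectionSupport k I V s)) : s y = 0 :=
  by_contra fun h => hy (subset_closure ⟨y.2, h⟩)

lemma exists_isOpen_forall_eq_const {I U : Set ℝ} {t : ↥(U ∩ I) → k} (ht : t ∈ secSub k I U)
    {x : ℝ} (hx : x ∈ U) : ∃ O, IsOpen O ∧ x ∈ O ∧ ∃ c : k, (x ∉ I → c = 0) ∧
      ∀ y (hy : y ∈ U ∩ I), y ∈ O → t ⟨y, hy⟩ = c := by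
  by_cases hxS : x ∈ closure (sectionSupport k I U t)
  · obtain ⟨hxUI, -⟩ := ht.2 x hx hxS
    obtain ⟨W, hW, hxW, htW⟩ := ht.1.exists_open (⟨x, hxUI⟩ : ↥(U ∩ I))
    obtain ⟨O, hO, rfl⟩ := isOpen_induced_iff.mp hW
    exact ⟨O, hO, hxW, t ⟨x, hxUI⟩, fun h => absurd hxUI.2 h, fun y hy hyO => htW ⟨y, hy⟩ hyO⟩
  · exact ⟨_, isClosed_closure.isOpen_compl, hxS, 0, fun _ => rfl,
      fun y hy hyO => eq_zero_of_notMem_closure_sectionSupport (y := ⟨y, hy⟩) hyO⟩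

lemma extendRestrict_of_mem {I J V : Set ℝ} (s : ↥(V ∩ J) → k) {x : ↥(V ∩ I)} (hx : x.1 ∈ J) :
    extendRestrict k I J V s x = s ⟨x.1, x.2.1, hx⟩ :=
  dif_pos hx

lemma extendRestrict_of_notMem {I J V : Set ℝ} (s : ↥(V ∩ J) → k) {x : ↥(V ∩ I)}
    (hx : x.1 ∉ J) : extendRestrict k I J V s x = 0 :=
  dif_neg hx

lemma sectionSupport_extendRestrict_subset (I J V : Set ℝ) (s : ↥(V ∩ J) → k) :
    sectionSupport k I V (extendRestrict k I J V s) ⊆ sectionSupport k J V s := by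
  rintro y ⟨hy, hne⟩
  by_cases hyJ : y ∈ J
  · exact ⟨⟨hy.1, hyJ⟩, by rwa [extendRestrict_of_mem s (x := ⟨y, hy⟩) hyJ] at hne⟩
  · exact absurd (extendRestrict_of_notMem s (x := ⟨y, hy⟩) hyJ) hne

lemma isLocallyConstant_extendRestrict {I J V : Set ℝ} (hJ : IsOpen J) {s : ↥(V ∩ J) → k}
    (hs : s ∈ secSub k J V) : IsLocallyConstant (extendRestrict k I J V s) := by
  rw [IsLocallyConstant.iff_exists_open]
  intro x
  by_cases hxJ : x.1 ∈ J
  · obtain ⟨W, hW, hxW, hsW⟩ := hs.1.exists_open (⟨x.1, x.2.1, hxJ⟩ : ↥(V ∩ J))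
    obtain ⟨O, hO, rfl⟩ := isOpen_induced_iff.mp hW
    refine ⟨Subtype.val ⁻¹' (O ∩ J), (hO.inter hJ).preimage continuous_subtype_val,
      ⟨hxW, hxJ⟩, fun y hy => ?_⟩
    rw [extendRestrict_of_mem s hy.2, extendRestrict_of_mem s hxJ]
    exact hsW ⟨y.1, y.2.1, hy.2⟩ hy.1
  · have hxS : x.1 ∉ closure (sectionSupport k J V s) := fun h => hxJ (hs.2 x.1 x.2.1 h).1.2
    refine ⟨Subtype.val ⁻¹' (closure (sectionSupport k J V s))ᶜ,
      isClosed_closure.isOpen_compl.preimage continuous_subtype_val, hxS, fun y hy => ?_⟩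
    rw [extendRestrict_of_notMem s hxJ]
    by_cases hyJ : y.1 ∈ J
    · rw [extendRestrict_of_mem s hyJ]
      exact eq_zero_of_notMem_closure_sectionSupport (s := s) (y := ⟨y.1, y.2.1, hyJ⟩) hy
    · exact extendRestrict_of_notMem s hyJ

lemma suppClosedIn_extendRestrict {I J V : Set ℝ} (hJI : J ∩ closure I ⊆ I)
    {s : ↥(V ∩ J) → k} (hs : SuppClosedIn k J V s) :
    SuppClosedIn k I V (extendRestrict k I J V s) := by
  intro x hxV hx
  obtain ⟨hxVJ, hne⟩ := hs x hxV (closure_mono (sectionSupport_extendRestrict_subset I J V s) hx)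
  have hxI : x ∈ I :=
    hJI ⟨hxVJ.2, closure_mono (s := sectionSupport k I V _) (fun _ hy => hy.1.2) hx⟩
  exact ⟨⟨hxV, hxI⟩, by rwa [extendRestrict_of_mem s (x := ⟨x, hxV, hxI⟩) hxVJ.2]⟩

variable (k)

def extendRestrictLM {I J : Set ℝ} (V : Set ℝ) (hJ : IsOpen J) (hJI : J ∩ closure I ⊆ I) :
    secSub k J V →ₗ[k] secSub k I V where
  toFun s := ⟨extendRestrict k I J V s,
    isLocallyConstant_extendRestrict hJ s.2, suppClosedIn_extendRestrict hJI s.2.2⟩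
  map_add' s t := by
    ext x
    by_cases hx : x.1 ∈ J
    · simp [extendRestrict_of_mem _ hx]
    · simp [extendRestrict_of_notMem _ hx]
  map_smul' c s := by
    ext x
    by_cases hx : x.1 ∈ J
    · simp [extendRestrict_of_mem _ hx]
    · simp [extendRestrict_of_notMem _ hx]

def intervalSheafHom {I J : Set ℝ} (hJ : IsOpen J) (hJI : J ∩ closure I ⊆ I) :
    intervalSheaf k J ⟶ intervalSheaf k I :=
  ⟨{ app := fun V => ModuleCat.ofHom (extendRestrictLM k V.unop.1 hJ hJI)
     naturality := fun _ _ _ => rfl }⟩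

end ExtensionByZero

section Coproducts

open Limits

-- Instance search for this is expensive, so it is done once here and used locally.
set_option synthInstance.maxHeartbeats 400000 in
set_option maxHeartbeats 2000000 in
theorem hasCoproducts_realSheafCat : HasCoproducts.{0} (RealSheafCat k) := inferInstance

attribute [local instance] hasCoproducts_realSheafCat

lemma sigmaDesc_hom_app_sigmaι_hom_app {A : Type} {F : A → RealSheafCat k} {G : RealSheafCat k}
    (ψ : ∀ α, F α ⟶ G) (α : A) (W : (Opens (TopCat.of ℝ))ᵒᵖ) (s : (F α).obj.obj W) :
    (Sigma.desc ψ).hom.app W ((Sigma.ι F α).hom.app W s) = (ψ α).hom.app W s :=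
  congrArg (fun g : F α ⟶ G => g.hom.app W s) (Sigma.ι_desc ψ α)

theorem epi_sigmaDesc_intervalSheafHom {I : Set ℝ} {A : Type} (J : A → Set ℝ)
    (hJ : ∀ α, IsOpen (J α)) (hJI : ∀ α, J α ∩ closure I ⊆ I) (hcov : I ⊆ ⋃ α, J α) :
    Epi (Sigma.desc fun α => intervalSheafHom k (hJ α) (hJI α)) := by
  suffices Sheaf.IsLocallySurjective (Sigma.desc fun α => intervalSheafHom k (hJ α) (hJI α)) from
    Sheaf.epi_of_isLocallySurjective _
  constructor
  intro U t x hxU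
  obtain ⟨O, hO, hxO, c, hc, htc⟩ := exists_isOpen_forall_eq_const t.2 hxU
  by_cases hxI : x ∈ I
  · obtain ⟨α, hα⟩ := mem_iUnion.1 (hcov hxI)
    let W : Opens (TopCat.of ℝ) := U ⊓ ⟨O ∩ J α, hO.inter (hJ α)⟩
    have hWJ : W.1 ⊆ J α := fun _ hy => hy.2.2
    refine ⟨W, homOfLE inf_le_left, ⟨(Sigma.ι (fun α => intervalSheaf k (J α)) α).hom.app
      (Opposite.op W) ⟨fun _ => c, const_mem_secSub k hWJ c⟩, ?_⟩, hxU, hxO, hα⟩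
    refine (sigmaDesc_hom_app_sigmaι_hom_app k _ α _ _).trans (Subtype.ext (funext fun y => ?_))
    exact (extendRestrict_of_mem _ y.2.1.2.2).trans (htc _ _ y.2.1.2.1).symm
  · refine ⟨U ⊓ ⟨O, hO⟩, homOfLE inf_le_left, ⟨0, ?_⟩, hxU, hxO⟩
    rw [map_zero]
    exact Subtype.ext (funext fun y => ((htc _ _ y.2.1.2).trans (hc hxI)).symm)

end Coproducts

set_option synthInstance.maxHeartbeats 400000 in
set_option maxHeartbeats 2000000 in
open CategoryTheory.Limits in
theorem epi_from_coproduct_of_opens_general (k : Type) [Field k]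
    (I : Set ℝ) (hI : I.OrdConnected) :
    ∃ (A : Type) (a b : A → ℝ), (∀ α, a α < b α) ∧
      (∀ K : Set ℝ, IsCompact K → {α | (Set.Ioo (a α) (b α) ∩ K).Nonempty}.Finite) ∧
      ∃ φ : (∐ fun α : A => intervalSheaf k (Set.Ioo (a α) (b α))) ⟶ intervalSheaf k I,
        Epi φ := by
  have hU : IsOpen (coborder I) :=
    isLocallyClosed_iff_isOpen_coborder.1 hI.isPreconnected.isLocallyClosed
  obtain ⟨A, a, b, hab, hlf, hsub, hcov⟩ := exists_locallyFinite_Ioo_cover hI hU subset_coborder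
  have hJI (α : A) : Ioo (a α) (b α) ∩ closure I ⊆ I :=
    (inter_subset_inter_left _ (hsub α)).trans coborder_inter_closure.subset
  exact ⟨A, a, b, hab, fun K hK => hlf.finite_nonempty_inter_compact hK, _,
    epi_sigmaDesc_intervalSheafHom k _ (fun _ => isOpen_Ioo) hJI hcov⟩

set_option synthInstance.maxHeartbeats 400000 in
set_option maxHeartbeats 2000000 in
open CategoryTheory.Limits in
/-- For every nonempty interval `I ⊆ ℝ` there is a locally finite family of
bounded open intervals `(a_α, b_α)` and an epimorphism `⊕_α k_{(a_α,b_α)} → k_I` in the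
category of sheaves of `k`-vector spaces on `ℝ`. -/
theorem epi_from_coproduct_of_opens (k : Type) [Field k]
    (I : Set ℝ) (hne : I.Nonempty) (hI : I.OrdConnected) :
    ∃ (A : Type) (a b : A → ℝ), (∀ α, a α < b α) ∧
      (∀ K : Set ℝ, IsCompact K → {α | (Set.Ioo (a α) (b α) ∩ K).Nonempty}.Finite) ∧
      ∃ φ : (∐ fun α : A => intervalSheaf k (Set.Ioo (a α) (b α))) ⟶ intervalSheaf k I,
        Epi φ :=
  epi_from_coproduct_of_opens_general k I hI

end
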